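/- Let H be a real symmetric N_g × N_g matrix with orthonormal eigenvectors ψ_1, …, ψ_{N_g} and eigenvalues ε_1 ≤ … ≤ ε_{N_g}, let 1 ≤ N_e < N_g, assume the gap ε_{N_e+1} − ε_{N_e} > 0, and set Q = I − Σ_{i=1}^{N_e} ψ_i ψ_iᵀ. Define χ₀ = 2 Σ_{i=1}^{N_e} Σ_{j=N_e+1}^{N_g} (ε_i − ε_j)^{-1} (ψ_i ⊙ ψ_j)(ψ_i ⊙ ψ_j)ᵀ. Then for every vector g ∈ ℝ^{N_g}, χ₀ g = 2 Σ_{i=1}^{N_e} ψ_i ⊙ ζ_i, where for each i, ζ_i is the unique element of the range of Q solving the Steinheimer equation Q(ε_i I − H)Q ζ_i = Q(ψ_i ⊙ g) (such ζ_i exists and is unique since ε_i < ε_{N_e+1}). -/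

import Mathlib

/-!
Expand everything in the orthonormal eigenbasis `ψ`. Since `Q` kills the occupied directions
and fixes the virtual ones, and `H` is diagonal in this basis, the Sternheimer equation decouples
into the scalar equations `(ε_i - ε_k) ⟪ψ_k, ζ_i⟫ = ⟪ψ_k, ψ_i ⊙ g⟫` for virtual `k`, while
`⟪ψ_k, ζ_i⟫ = 0` for occupied `k` because `ζ_i ∈ range Q`. The gap makes `ε_i - ε_k` invertible,
so `ζ_i = ∑_{k virtual} (ε_i - ε_k)⁻¹ ⟪ψ_i ⊙ ψ_k, g⟫ ψ_k`, and multiplying by `ψ_i` entrywise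
reproduces the column of the Adler–Wiser sum.
-/

open Matrix

namespace Matrix

variable {n : Type*} [Fintype n]

section CommRing

variable {R : Type*} [CommRing R]

theorem vecMulVec_self_mulVec (u v : n → R) : vecMulVec u u *ᵥ v = (u ⬝ᵥ v) • u := by
  rw [vecMulVec_mulVec, op_smul_eq_smul]

theorem one_sub_sum_vecMulVec_mulVec [DecidableEq n] (ψ : n → n → R) (s : Finset n)
    (v : n → R) :
    (1 - ∑ i ∈ s, vecMulVec (ψ i) (ψ i)) *ᵥ v = v - ∑ i ∈ s, (ψ i ⬝ᵥ v) • ψ i := by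
  simp only [sub_mulVec, one_mulVec, sum_mulVec, vecMulVec_self_mulVec]

theorem IsSymm.dotProduct_mulVec_of_mulVec_eq_smul {H : Matrix n n R} (hH : H.IsSymm)
    {u : n → R} {μ : R} (hu : H *ᵥ u = μ • u) (v : n → R) :
    u ⬝ᵥ (H *ᵥ v) = μ * (u ⬝ᵥ v) := by
  rw [dotProduct_mulVec, ← mulVec_transpose, hH.eq, hu, smul_dotProduct, smul_eq_mul]

theorem hadamard_dotProduct (a b v : n → R) : (a * b) ⬝ᵥ v = b ⬝ᵥ (a * v) := by
  simp only [dotProduct, Pi.mul_apply]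
  exact Finset.sum_congr rfl fun _ _ => by ring

theorem vecMulVec_hadamard_mulVec (a b v : n → R) :
    vecMulVec (a * b) (a * b) *ᵥ v = a * ((b ⬝ᵥ (a * v)) • b) := by
  rw [vecMulVec_self_mulVec, hadamard_dotProduct, mul_smul_comm]

theorem dotProduct_one_sub_sum_vecMulVec_mulVec [DecidableEq n] {ψ : n → n → R}
    (horth : ∀ i j, ψ i ⬝ᵥ ψ j = if i = j then 1 else 0) (s : Finset n) (k : n) (v : n → R) :
    ψ k ⬝ᵥ ((1 - ∑ i ∈ s, vecMulVec (ψ i) (ψ i)) *ᵥ v) = if k ∈ s then 0 else ψ k ⬝ᵥ v := by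
  simp only [one_sub_sum_vecMulVec_mulVec, dotProduct_sub, dotProduct_sum, dotProduct_smul,
    horth, smul_eq_mul, mul_ite, mul_one, mul_zero, Finset.sum_ite_eq]
  split_ifs <;> simp

theorem sum_vecMulVec_self_eq_one [DecidableEq n] {ψ : n → n → R}
    (horth : ∀ i j, ψ i ⬝ᵥ ψ j = if i = j then 1 else 0) :
    ∑ k, vecMulVec (ψ k) (ψ k) = 1 := by
  have hrows : of ψ * (of ψ)ᵀ = 1 := by
    ext i j
    simpa [mul_apply, dotProduct, one_apply] using horth i j
  rw [← mul_eq_one_comm.mp hrows]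
  ext a b
  simp [mul_apply, vecMulVec, sum_apply]

theorem eq_sum_dotProduct_smul [DecidableEq n] {ψ : n → n → R}
    (horth : ∀ i j, ψ i ⬝ᵥ ψ j = if i = j then 1 else 0) (v : n → R) :
    v = ∑ k, (ψ k ⬝ᵥ v) • ψ k := by
  simpa [sum_mulVec, vecMulVec_self_mulVec] using
    congrArg (· *ᵥ v) (sum_vecMulVec_self_eq_one horth).symm

end CommRing

section Field

variable [DecidableEq n] {K : Type*} [Field K] {ψ : n → n → K} {ε : n → K} {H : Matrix n n K}

theorem dotProduct_eq_of_sternheimer (horth : ∀ i j, ψ i ⬝ᵥ ψ j = if i = j then 1 else 0)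
    (hH : H.IsSymm) (heig : ∀ k, H *ᵥ ψ k = ε k • ψ k) {s : Finset n} {μ : K}
    (hμ : ∀ k ∉ s, μ ≠ ε k) {ζ f : n → K}
    (hζ : ∃ w, ζ = (1 - ∑ i ∈ s, vecMulVec (ψ i) (ψ i)) *ᵥ w)
    (hsol : ((1 - ∑ i ∈ s, vecMulVec (ψ i) (ψ i)) * (μ • 1 - H) *
      (1 - ∑ i ∈ s, vecMulVec (ψ i) (ψ i))) *ᵥ ζ =
      (1 - ∑ i ∈ s, vecMulVec (ψ i) (ψ i)) *ᵥ f) (k : n) :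
    ψ k ⬝ᵥ ζ = if k ∈ s then 0 else (μ - ε k)⁻¹ * (ψ k ⬝ᵥ f) := by
  set Q := 1 - ∑ i ∈ s, vecMulVec (ψ i) (ψ i)
  have hcoeff := dotProduct_one_sub_sum_vecMulVec_mulVec horth s
  obtain ⟨w, rfl⟩ := hζ
  split_ifs with hk
  · rw [hcoeff, if_pos hk]
  have hfix : Q *ᵥ (Q *ᵥ w) = Q *ᵥ w := by
    rw [one_sub_sum_vecMulVec_mulVec, sub_eq_self]
    exact Finset.sum_eq_zero fun i hi => by rw [hcoeff, if_pos hi, zero_smul]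
  have heqn := congrArg (ψ k ⬝ᵥ ·) hsol
  simp only [← mulVec_mulVec, hfix] at heqn
  rw [hcoeff, hcoeff, if_neg hk, if_neg hk] at heqn
  simp only [sub_mulVec, smul_mulVec, one_mulVec, dotProduct_sub, dotProduct_smul, smul_eq_mul,
    hH.dotProduct_mulVec_of_mulVec_eq_smul (heig k)] at heqn
  rw [eq_inv_mul_iff_mul_eq₀ (sub_ne_zero.mpr (hμ k hk)), ← heqn]
  ring

theorem eq_sum_of_sternheimer (horth : ∀ i j, ψ i ⬝ᵥ ψ j = if i = j then 1 else 0)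
    (hH : H.IsSymm) (heig : ∀ k, H *ᵥ ψ k = ε k • ψ k) {s : Finset n} {μ : K}
    (hμ : ∀ k ∉ s, μ ≠ ε k) {ζ f : n → K}
    (hζ : ∃ w, ζ = (1 - ∑ i ∈ s, vecMulVec (ψ i) (ψ i)) *ᵥ w)
    (hsol : ((1 - ∑ i ∈ s, vecMulVec (ψ i) (ψ i)) * (μ • 1 - H) *
      (1 - ∑ i ∈ s, vecMulVec (ψ i) (ψ i))) *ᵥ ζ =
      (1 - ∑ i ∈ s, vecMulVec (ψ i) (ψ i)) *ᵥ f) :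
    ζ = ∑ k ∈ sᶜ, ((μ - ε k)⁻¹ * (ψ k ⬝ᵥ f)) • ψ k := by
  rw [eq_sum_dotProduct_smul horth ζ]
  simp only [dotProduct_eq_of_sternheimer horth hH heig hμ hζ hsol, ite_smul, zero_smul,
    Finset.sum_ite, Finset.sum_const_zero, zero_add, Finset.filter_not, Finset.filter_mem_eq_inter,
    Finset.univ_inter, Finset.compl_eq_univ_sdiff]

end Field

end Matrix

theorem Monotone.lt_of_gap {α : Type*} [Preorder α] {m N : ℕ} {ε : Fin m → α}
    (hε : Monotone ε) {h₁ : N - 1 < m} {h₂ : N < m} (hgap : ε ⟨N - 1, h₁⟩ < ε ⟨N, h₂⟩)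
    {i k : Fin m} (hi : (i : ℕ) < N) (hk : N ≤ (k : ℕ)) : ε i < ε k :=
  (hε (Fin.mk_le_mk.mpr (by omega) : i ≤ ⟨N - 1, h₁⟩)).trans_lt
    (hgap.trans_le (hε (Fin.mk_le_mk.mpr hk : (⟨N, h₂⟩ : Fin m) ≤ k)))

/-- For every g, χ₀ g = 2 Σ_{i occupied} ψ_i ⊙ ζ_i, where each ζ_i is the
(unique) element of the range of Q solving the Steinheimer equation
Q(ε_i I − H)Q ζ_i = Q(ψ_i ⊙ g). -/
theorem stmt3 (Ng Ne : ℕ) (hlt : Ne < Ng)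
    (H : Matrix (Fin Ng) (Fin Ng) ℝ) (hH : H.IsSymm)
    (ψ : Fin Ng → Fin Ng → ℝ) (ε : Fin Ng → ℝ)
    (horth : ∀ i j : Fin Ng, ψ i ⬝ᵥ ψ j = if i = j then (1 : ℝ) else 0)
    (heig : ∀ i : Fin Ng, H *ᵥ ψ i = ε i • ψ i)
    (hmono : Monotone ε)
    (hgap : ε ⟨Ne - 1, by omega⟩ < ε ⟨Ne, hlt⟩)
    (Q : Matrix (Fin Ng) (Fin Ng) ℝ)
    (hQ : Q = 1 - ∑ i ∈ Finset.univ.filter (fun i : Fin Ng => (i : ℕ) < Ne),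
      vecMulVec (ψ i) (ψ i))
    (χ₀ : Matrix (Fin Ng) (Fin Ng) ℝ)
    (hχ₀ : χ₀ = (2 : ℝ) • ∑ i ∈ Finset.univ.filter (fun i : Fin Ng => (i : ℕ) < Ne),
      ∑ j ∈ Finset.univ.filter (fun j : Fin Ng => Ne ≤ (j : ℕ)),
        (ε i - ε j)⁻¹ • vecMulVec (ψ i * ψ j) (ψ i * ψ j))
    (g : Fin Ng → ℝ)
    (ζ : Fin Ng → Fin Ng → ℝ)
    (hrange : ∀ i : Fin Ng, (i : ℕ) < Ne → ∃ w, ζ i = Q *ᵥ w)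
    (hsol : ∀ i : Fin Ng, (i : ℕ) < Ne →
      (Q * (ε i • (1 : Matrix (Fin Ng) (Fin Ng) ℝ) - H) * Q) *ᵥ ζ i = Q *ᵥ (ψ i * g)) :
    χ₀ *ᵥ g = (2 : ℝ) •
      ∑ i ∈ Finset.univ.filter (fun i : Fin Ng => (i : ℕ) < Ne), ψ i * ζ i := by
  subst hQ hχ₀
  set occ := Finset.univ.filter (fun i : Fin Ng => (i : ℕ) < Ne)
  have hvirt : Finset.univ.filter (fun j : Fin Ng => Ne ≤ (j : ℕ)) = occᶜ := by
    ext j; simp [occ]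
  have hζ : ∀ i ∈ occ, ζ i = ∑ k ∈ occᶜ, ((ε i - ε k)⁻¹ * (ψ k ⬝ᵥ (ψ i * g))) • ψ k := by
    intro i hi
    have hi : (i : ℕ) < Ne := (Finset.mem_filter.mp hi).2
    refine eq_sum_of_sternheimer horth hH heig (fun k hk => ?_) (hrange i hi) (hsol i hi)
    exact (hmono.lt_of_gap hgap hi (by simpa [occ] using hk)).ne
  rw [hvirt, smul_mulVec, sum_mulVec]
  congr 1
  refine Finset.sum_congr rfl fun i hi => ?_
  simp only [hζ i hi, sum_mulVec, smul_mulVec, vecMulVec_hadamard_mulVec, Finset.mul_sum,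
    mul_smul_comm, smul_smul]
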